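/- arXiv:2307.01538 — 5 statements merged into one kernel-verified Lean document; each statement's English description precedes it below -/
import Mathlib

section
/- The map $m\mapsto \Pi(m)$ from $\R^N$ to finite signed measures on $\M$ is Lipschitz continuous with respect to the total variation norm: there exists $C<\infty$ such that $\|\Pi(m)-\Pi(m')\|_{TV} \le C|m-m'|$ for all $m,m'\in\R^N$, provided $\|v\|_\infty \le 1$. -/
open MeasureTheory

lemma aux_exp (a b : ℝ) (h : |a - b| ≤ 1) :
    |Real.exp (-a) - Real.exp (-b)| ≤ 2 * |a - b| * Real.exp (-a) := by
  have hb : Real.exp (-b) = Real.exp (-a) * Real.exp (a - b) := by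
    rw [← Real.exp_add]; ring_nf
  rw [hb]
  have h2 : |Real.exp (a - b) - 1| ≤ 2 * |a - b| := Real.abs_exp_sub_one_le h
  calc |Real.exp (-a) - Real.exp (-a) * Real.exp (a - b)|
      = Real.exp (-a) * |Real.exp (a - b) - 1| := by
        rw [← abs_neg]
        rw [show -(Real.exp (-a) - Real.exp (-a) * Real.exp (a - b))
          = Real.exp (-a) * (Real.exp (a - b) - 1) by ring, abs_mul,
          abs_of_pos (Real.exp_pos (-a))]
    _ ≤ Real.exp (-a) * (2 * |a - b|) := by
        exact mul_le_mul_of_nonneg_left h2 (Real.exp_pos _).le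
    _ = 2 * |a - b| * Real.exp (-a) := by ring

lemma aux_int {M : Type*} [MeasurableSpace M] [TopologicalSpace M] [BorelSpace M]
    [CompactSpace M] (μ : Measure M) [IsFiniteMeasure μ] {g : M → ℝ} (hg : Continuous g) :
    Integrable g μ :=
  hg.integrable_of_hasCompactSupport
    (IsCompact.of_isClosed_subset isCompact_univ (isClosed_tsupport g) (Set.subset_univ _))

/-- If `‖v‖_∞ ≤ 1` (Euclidean norm pointwise), the map `m ↦ Π m` is
Lipschitz in total variation: there is `C < ∞` with
`‖Π m - Π m'‖_TV ≤ C |m - m'|`, expressed via test functions `f` with `‖f‖_∞ ≤ 1`. -/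
theorem stmt3 {M : Type*} [MeasurableSpace M] [TopologicalSpace M] [BorelSpace M]
    [CompactSpace M] (μ : Measure M) [IsFiniteMeasure μ] (hμ : μ Set.univ ≠ 0)
    {N : ℕ} (v : M → Fin N → ℝ) (hv : Continuous v)
    (hv1 : ∀ x, ∑ i, (v x i) ^ 2 ≤ 1)
    (Z : (Fin N → ℝ) → ℝ)
    (hZ : ∀ m, Z m = ∫ x, Real.exp (-(∑ j, m j * v x j)) ∂μ)
    (Pi' : (Fin N → ℝ) → Measure M)
    (hPi : ∀ m, Pi' m = (ENNReal.ofReal (Z m))⁻¹ •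
      μ.withDensity (fun x => ENNReal.ofReal (Real.exp (-(∑ j, m j * v x j))))) :
    ∃ C : ℝ, 0 ≤ C ∧ ∀ m m' : Fin N → ℝ, ∀ f : M → ℝ, Continuous f → (∀ x, |f x| ≤ 1) →
      |(∫ x, f x ∂(Pi' m)) - ∫ x, f x ∂(Pi' m')| ≤
        C * Real.sqrt (∑ i, (m i - m' i) ^ 2) := by
  classical
  -- the density functions
  set g : (Fin N → ℝ) → M → ℝ := fun m x => Real.exp (-(∑ j, m j * v x j)) with hg
  have hgcont : ∀ m, Continuous (g m) := by
    intro m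
    apply Real.continuous_exp.comp
    exact (continuous_finset_sum _ fun j _ =>
      (continuous_const.mul ((continuous_apply j).comp hv))).neg
  have hgpos : ∀ m x, 0 < g m x := fun m x => Real.exp_pos _
  have hgint : ∀ m, Integrable (g m) μ := fun m => aux_int μ (hgcont m)
  have hZval : ∀ m, Z m = ∫ x, g m x ∂μ := hZ
  have hZpos : ∀ m, 0 < Z m := by
    intro m
    rw [hZval m]
    rw [integral_pos_iff_support_of_nonneg (fun x => (hgpos m x).le) (hgint m)]
    have : Function.support (g m) = Set.univ := Set.eq_univ_of_forall fun x => (hgpos m x).ne'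
    rw [this]
    exact pos_iff_ne_zero.mpr hμ
  -- integral against Pi'
  have hPiInt : ∀ m (f : M → ℝ),
      ∫ x, f x ∂(Pi' m) = (Z m)⁻¹ * ∫ x, f x * g m x ∂μ := by
    intro m f
    rw [hPi m, integral_smul_measure]
    have hmeas : Measurable fun x => (g m x).toNNReal :=
      (continuous_real_toNNReal.comp (hgcont m)).measurable
    have hwd : (μ.withDensity fun x => ENNReal.ofReal (Real.exp (-(∑ j, m j * v x j))))
        = μ.withDensity fun x => ((g m x).toNNReal : ENNReal) := rfl
    rw [hwd, integral_withDensity_eq_integral_smul hmeas]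
    have h1 : ((ENNReal.ofReal (Z m))⁻¹).toReal = (Z m)⁻¹ := by
      rw [ENNReal.toReal_inv, ENNReal.toReal_ofReal (hZpos m).le]
    rw [h1]
    congr 1
    · apply integral_congr_ae
      filter_upwards with x
      rw [NNReal.smul_def, Real.coe_toNNReal _ (hgpos m x).le, smul_eq_mul]
      ring
  refine ⟨4, by norm_num, ?_⟩
  intro m m' f hf hf1
  set t := Real.sqrt (∑ i, (m i - m' i) ^ 2) with ht
  have ht0 : 0 ≤ t := Real.sqrt_nonneg _
  -- Cauchy-Schwarz
  have hab : ∀ x, |(∑ j, m j * v x j) - ∑ j, m' j * v x j| ≤ t := by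
    intro x
    have hsub : (∑ j, m j * v x j) - ∑ j, m' j * v x j = ∑ j, (m j - m' j) * v x j := by
      rw [← Finset.sum_sub_distrib]; congr 1; ext j; ring
    rw [hsub]
    have hsq := Finset.sum_mul_sq_le_sq_mul_sq Finset.univ (fun j => m j - m' j)
      (fun j => v x j)
    have hvn : (0:ℝ) ≤ ∑ j, (v x j) ^ 2 := Finset.sum_nonneg fun j _ => sq_nonneg _
    have hdn : (0:ℝ) ≤ ∑ j, (m j - m' j) ^ 2 := Finset.sum_nonneg fun j _ => sq_nonneg _
    have h2 : (∑ j, (m j - m' j) * v x j) ^ 2 ≤ t ^ 2 := by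
      rw [ht, Real.sq_sqrt hdn]
      nlinarith [hv1 x]
    have h3 := Real.sqrt_le_sqrt h2
    rwa [Real.sqrt_sq_eq_abs, Real.sqrt_sq ht0] at h3
  -- abbreviations
  have habsint : ∀ (h : M → ℝ), |∫ x, h x ∂μ| ≤ ∫ x, |h x| ∂μ := fun h => by
    simpa [Real.norm_eq_abs] using norm_integral_le_integral_norm (μ := μ) h
  have hfgint : ∀ m0, Integrable (fun x => f x * g m0 x) μ := fun m0 =>
    aux_int μ (hf.mul (hgcont m0))
  rw [hPiInt m f, hPiInt m' f]
  set A := ∫ x, f x * g m x ∂μ with hA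
  set A' := ∫ x, f x * g m' x ∂μ with hA'
  have habsA' : |A'| ≤ Z m' := by
    rw [hZval m']
    calc |A'| ≤ ∫ x, |f x * g m' x| ∂μ := habsint _
      _ ≤ ∫ x, g m' x ∂μ := by
          apply integral_mono (hfgint m').abs (hgint m')
          intro x
          show |f x * g m' x| ≤ g m' x
          rw [abs_mul, abs_of_pos (hgpos m' x)]
          exact mul_le_of_le_one_left (hgpos m' x).le (hf1 x)
  have habsA : |A| ≤ Z m := by
    rw [hZval m]
    calc |A| ≤ ∫ x, |f x * g m x| ∂μ := habsint _
      _ ≤ ∫ x, g m x ∂μ := by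
          apply integral_mono (hfgint m).abs (hgint m)
          intro x
          show |f x * g m x| ≤ g m x
          rw [abs_mul, abs_of_pos (hgpos m x)]
          exact mul_le_of_le_one_left (hgpos m x).le (hf1 x)
  by_cases hcase : t ≤ 1
  · -- pointwise bound
    have hpt : ∀ x, |g m x - g m' x| ≤ 2 * t * g m x := by
      intro x
      have h1 := aux_exp (∑ j, m j * v x j) (∑ j, m' j * v x j) ((hab x).trans hcase)
      refine h1.trans ?_
      have : |(∑ j, m j * v x j) - ∑ j, m' j * v x j| * g m x ≤ t * g m x :=
        mul_le_mul_of_nonneg_right (hab x) (hgpos m x).le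
      calc 2 * |(∑ j, m j * v x j) - ∑ j, m' j * v x j| * Real.exp (-(∑ j, m j * v x j))
          = 2 * (|(∑ j, m j * v x j) - ∑ j, m' j * v x j| * g m x) := by rw [hg]; ring
        _ ≤ 2 * (t * g m x) := by linarith
        _ = 2 * t * g m x := by ring
    set D := ∫ x, |g m x - g m' x| ∂μ with hD
    have hDint : Integrable (fun x => |g m x - g m' x|) μ :=
      ((hgint m).sub (hgint m')).abs
    have hDle : D ≤ 2 * t * Z m := by
      rw [hZval m, ← integral_const_mul]
      exact integral_mono hDint ((hgint m).const_mul _) hpt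
    have hD0 : 0 ≤ D := integral_nonneg fun x => abs_nonneg _
    have hAA' : |A - A'| ≤ D := by
      rw [hA, hA', ← integral_sub (hfgint m) (hfgint m')]
      calc |∫ x, (f x * g m x - f x * g m' x) ∂μ|
          ≤ ∫ x, |f x * g m x - f x * g m' x| ∂μ := habsint _
        _ ≤ D := by
            apply integral_mono (((hfgint m).sub (hfgint m')).abs) hDint
            intro x
            show |f x * g m x - f x * g m' x| ≤ |g m x - g m' x|
            rw [show f x * g m x - f x * g m' x = f x * (g m x - g m' x) by ring, abs_mul]
            exact mul_le_of_le_one_left (abs_nonneg _) (hf1 x)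
    have hZZ : |Z m' - Z m| ≤ D := by
      rw [hZval m', hZval m, ← integral_sub (hgint m') (hgint m)]
      calc |∫ x, (g m' x - g m x) ∂μ| ≤ ∫ x, |g m' x - g m x| ∂μ := habsint _
        _ = D := by rw [hD]; congr 1; ext x; rw [abs_sub_comm]
    have hkey : (Z m)⁻¹ * A - (Z m')⁻¹ * A'
        = (A - A') / Z m + A' * (Z m' - Z m) / (Z m * Z m') := by
      have h1 := (hZpos m).ne'
      have h2 := (hZpos m').ne'
      field_simp
      ring
    rw [hkey]
    have hb1 : |(A - A') / Z m| ≤ D / Z m := by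
      rw [abs_div, abs_of_pos (hZpos m)]
      gcongr
      exact (hZpos m).le
    have hb2 : |A' * (Z m' - Z m) / (Z m * Z m')| ≤ D / Z m := by
      rw [abs_div, abs_mul, abs_of_pos (mul_pos (hZpos m) (hZpos m'))]
      rw [div_le_div_iff₀ (mul_pos (hZpos m) (hZpos m')) (hZpos m)]
      calc |A'| * |Z m' - Z m| * Z m ≤ Z m' * D * Z m := by
            apply mul_le_mul_of_nonneg_right _ (hZpos m).le
            exact mul_le_mul habsA' hZZ (abs_nonneg _) (hZpos m').le
        _ = D * (Z m * Z m') := by ring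
    calc |(A - A') / Z m + A' * (Z m' - Z m) / (Z m * Z m')|
        ≤ |(A - A') / Z m| + |A' * (Z m' - Z m) / (Z m * Z m')| := abs_add_le _ _
      _ ≤ D / Z m + D / Z m := add_le_add hb1 hb2
      _ = 2 * (D / Z m) := by ring
      _ ≤ 2 * (2 * t) := by
          apply mul_le_mul_of_nonneg_left _ (by norm_num)
          rw [div_le_iff₀ (hZpos m)]
          calc D ≤ 2 * t * Z m := hDle
            _ = 2 * t * Z m := rfl
      _ = 4 * t := by ring
  · -- t > 1 : trivial bound by 2
    push_neg at hcase
    have h1 : |(Z m)⁻¹ * A| ≤ 1 := by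
      rw [abs_mul, abs_inv, abs_of_pos (hZpos m)]
      rw [inv_mul_le_iff₀ (hZpos m), mul_one]
      exact habsA
    have h2 : |(Z m')⁻¹ * A'| ≤ 1 := by
      rw [abs_mul, abs_inv, abs_of_pos (hZpos m')]
      rw [inv_mul_le_iff₀ (hZpos m'), mul_one]
      exact habsA'
    calc |(Z m)⁻¹ * A - (Z m')⁻¹ * A'| ≤ |(Z m)⁻¹ * A| + |(Z m')⁻¹ * A'| := abs_sub _ _
      _ ≤ 1 + 1 := add_le_add h1 h2
      _ ≤ 4 * t := by nlinarith
end

section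
/- Under the assumptions of the previous statement and additionally $\int_\M v\,dx = 0$, one has $m\cdot\nabla J(m) \ge (1-\Lambda\beta_0)|m|^2$ for all $m\in\R^N$, where $\nabla J(m)=m-\Pi(\beta m)(v)$. -/
/-!
Put `w = m ⬝ v`. The Gibbs measure `Π(t m)` is the exponential tilt of `μ` by `-t w`, so
`m ⬝ Π(β m)(v) = K'(-β)`, where `K` is the cumulant generating function of `w`. Its second
derivative `K''(t)` is the variance of `w` under a Gibbs measure, hence lies in `[0, Λ |m|²]`, and
`K'(0) = 0` because `w` has mean zero. So for `-β ≤ β₀`,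
`K'(-β) ≤ K'(β₀) ≤ K'(0) + Λ |m|² β₀ = Λ β₀ |m|²`.
-/

open MeasureTheory Real ProbabilityTheory

section CompactSpace

variable {Ω : Type*} [MeasurableSpace Ω] [TopologicalSpace Ω] [CompactSpace Ω]
  [OpensMeasurableSpace Ω] {μ : Measure Ω} [IsFiniteMeasure μ]
  {E : Type*} [NormedAddCommGroup E] {f : Ω → E}

lemma Continuous.integrable_of_compactSpace (hf : Continuous f) : Integrable f μ :=
  hf.integrable_of_hasCompactSupport (HasCompactSupport.of_compactSpace f)

lemma Continuous.memLp_of_compactSpace (hf : Continuous f) (p : ENNReal) : MemLp f p μ :=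
  hf.memLp_of_hasCompactSupport (HasCompactSupport.of_compactSpace f)

lemma integrableExpSet_eq_univ_of_continuous {X : Ω → ℝ} (hX : Continuous X) :
    integrableExpSet X μ = Set.univ :=
  Set.eq_univ_of_forall fun _ => (continuous_const.mul hX).rexp.integrable_of_compactSpace

end CompactSpace

section Tilted

variable {Ω : Type*} [MeasurableSpace Ω] {μ : Measure Ω}

lemma smul_withDensity_exp_eq_tilted [NeZero μ] {f : Ω → ℝ}
    (hf : Integrable (fun x => exp (f x)) μ) :
    (ENNReal.ofReal (∫ x, exp (f x) ∂μ))⁻¹ • μ.withDensity (fun x => ENNReal.ofReal (exp (f x)))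
      = μ.tilted f := by
  have hZ := integral_exp_pos hf
  rw [Measure.tilted, ← withDensity_smul' _ _ (ENNReal.inv_ne_top.2 (by simpa using hZ))]
  congr with x
  rw [ENNReal.ofReal_div_of_pos hZ, div_eq_mul_inv, mul_comm]
  rfl

variable {X : Ω → ℝ}

lemma hasDerivAt_deriv_cgf {t : ℝ} (ht : t ∈ interior (integrableExpSet X μ)) :
    HasDerivAt (deriv (cgf X μ)) Var[X; μ.tilted (t * X ·)] t := by
  rw [variance_tilted_mul ht, iteratedDeriv_succ, iteratedDeriv_one]
  exact (analyticAt_cgf ht).deriv.differentiableAt.hasDerivAt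

lemma deriv_cgf_le_deriv_cgf_zero_add (hX : integrableExpSet X μ = Set.univ) {C a b : ℝ}
    (hC : ∀ t, Var[X; μ.tilted (t * X ·)] ≤ C) (hb : 0 ≤ b) (hab : a ≤ b) :
    deriv (cgf X μ) a ≤ deriv (cgf X μ) 0 + C * b := by
  have hderiv : ∀ t, HasDerivAt (deriv (cgf X μ)) Var[X; μ.tilted (t * X ·)] t :=
    fun t => hasDerivAt_deriv_cgf (by simp [hX])
  have hdiff : Differentiable ℝ (deriv (cgf X μ)) := fun t => (hderiv t).differentiableAt
  have hmono : Monotone (deriv (cgf X μ)) :=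
    monotone_of_deriv_nonneg hdiff fun t => (hderiv t).deriv ▸ variance_nonneg _ _
  have hlip := image_sub_le_mul_sub_of_deriv_le hdiff (fun t => (hderiv t).deriv ▸ hC t) hb
  linarith [hmono hab]

end Tilted

section Covariance

variable {Ω ι : Type*} [MeasurableSpace Ω] [Fintype ι] {v : Ω → ι → ℝ}

lemma integral_sum_const_mul {ν : Measure Ω} (hv : ∀ i, Integrable (fun y => v y i) ν)
    (m : ι → ℝ) : ∫ y, ∑ i, m i * v y i ∂ν = ∑ i, m i * ∫ y, v y i ∂ν := by
  rw [integral_finsetSum _ fun i _ => (hv i).const_mul (m i)]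
  simp_rw [integral_const_mul]

lemma sum_mul_covariance_eq_variance {ν : Measure Ω} [IsProbabilityMeasure ν]
    (hv : ∀ i, MemLp (fun y => v y i) 2 ν) (x : ι → ℝ) :
    ∑ i, ∑ j, x i * x j * ((∫ y, v y i * v y j ∂ν) - (∫ y, v y i ∂ν) * (∫ y, v y j ∂ν))
      = Var[fun y => ∑ i, x i * v y i; ν] := by
  have hx : ∀ i, MemLp (fun y => x i * v y i) 2 ν := fun i => (hv i).const_mul (x i)
  rw [← covariance_self (memLp_finsetSum _ fun i _ => hx i).aestronglyMeasurable.aemeasurable,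
    covariance_fun_sum_fun_sum hx hx]
  refine Finset.sum_congr rfl fun i _ => Finset.sum_congr rfl fun j _ => ?_
  rw [covariance_const_mul_left, covariance_const_mul_right, covariance_eq_sub (hv i) (hv j)]
  simp only [Pi.mul_apply]
  ring

lemma variance_sum_mul_le {ν : Measure Ω} [IsProbabilityMeasure ν]
    (hv : ∀ i, AEStronglyMeasurable (fun y => v y i) ν) {K : ℝ} (hK : ∀ y, ∑ i, v y i ^ 2 ≤ K)
    {x : ι → ℝ} (hx : ∑ i, x i ^ 2 = 1) :
    Var[fun y => ∑ i, x i * v y i; ν] ≤ K := by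
  have hmeas : AEStronglyMeasurable (fun y => ∑ i, x i * v y i) ν :=
    Finset.aestronglyMeasurable_fun_sum _ fun i _ => (hv i).const_mul (x i)
  have hpt : ∀ y, (∑ i, x i * v y i) ^ 2 ≤ K := fun y =>
    (Finset.sum_mul_sq_le_sq_mul_sq _ _ _).trans (by rw [hx, one_mul]; exact hK y)
  calc Var[fun y => ∑ i, x i * v y i; ν] ≤ ν[(fun y => ∑ i, x i * v y i) ^ 2] :=
        variance_le_expectation_sq hmeas
    _ ≤ ‖ν[(fun y => ∑ i, x i * v y i) ^ 2]‖ := Real.le_norm_self _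
    _ ≤ K * ν.real Set.univ := norm_integral_le_of_norm_le_const
        (f := (fun y => ∑ i, x i * v y i) ^ 2) (ae_of_all _ fun y => by
        simpa only [Pi.pow_apply, Real.norm_eq_abs, abs_pow, sq_abs] using hpt y)
    _ = K := by simp

lemma variance_le_sSup_mul {P : Type*} {ν : P → Measure Ω} [∀ p, IsProbabilityMeasure (ν p)]
    (hv : ∀ p i, MemLp (fun y => v y i) 2 (ν p)) {K : ℝ} (hK : ∀ y, ∑ i, v y i ^ 2 ≤ K)
    (p : P) (m : ι → ℝ) :
    Var[fun y => ∑ i, m i * v y i; ν p] ≤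
      sSup {r : ℝ | ∃ (q : P) (x : ι → ℝ), (∑ i, x i ^ 2 = 1) ∧
        r = ∑ i, ∑ j, x i * x j *
          ((∫ y, v y i * v y j ∂(ν q)) - (∫ y, v y i ∂(ν q)) * (∫ y, v y j ∂(ν q)))} *
        ∑ i, m i ^ 2 := by
  set S := {r : ℝ | ∃ (q : P) (x : ι → ℝ), (∑ i, x i ^ 2 = 1) ∧
        r = ∑ i, ∑ j, x i * x j *
          ((∫ y, v y i * v y j ∂(ν q)) - (∫ y, v y i ∂(ν q)) * (∫ y, v y j ∂(ν q)))}
  have hbdd : BddAbove S := ⟨K, by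
    rintro r ⟨q, x, hx, rfl⟩
    rw [sum_mul_covariance_eq_variance (hv q)]
    exact variance_sum_mul_le (fun i => (hv q i).aestronglyMeasurable) hK hx⟩
  have hs0 : 0 ≤ ∑ i, m i ^ 2 := Finset.sum_nonneg fun i _ => sq_nonneg (m i)
  rcases hs0.eq_or_lt with hs | hs
  · have hm : ∀ i, m i = 0 := fun i => pow_eq_zero_iff two_ne_zero |>.1 <|
      (Finset.sum_eq_zero_iff_of_nonneg fun i _ => sq_nonneg (m i)).1 hs.symm i (Finset.mem_univ i)
    have hm0 : (fun y => ∑ i, m i * v y i) = 0 := by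
      funext y
      simp [hm]
    rw [hm0, variance_zero, ← hs, mul_zero]
  set s := ∑ i, m i ^ 2
  have hsqrt : √s ≠ 0 := (Real.sqrt_pos.2 hs).ne'
  set x : ι → ℝ := fun i => m i / √s
  have hx : ∑ i, x i ^ 2 = 1 := by
    simp only [x, div_pow, Real.sq_sqrt hs.le]
    rw [← Finset.sum_div, div_self hs.ne']
  have hmx : (fun y => ∑ i, m i * v y i) = fun y => √s * ∑ i, x i * v y i := by
    funext y
    rw [Finset.mul_sum]
    refine Finset.sum_congr rfl fun i _ => ?_
    simp only [x]
    field_simp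
  have hmem : Var[fun y => ∑ i, x i * v y i; ν p] ∈ S :=
    ⟨p, x, hx, (sum_mul_covariance_eq_variance (hv p) x).symm⟩
  rw [hmx, variance_const_mul, Real.sq_sqrt hs.le, mul_comm]
  exact mul_le_mul_of_nonneg_right (le_csSup hbdd hmem) hs.le

end Covariance

theorem stmt7_general {M : Type*} [MeasurableSpace M] [TopologicalSpace M] [BorelSpace M]
    [CompactSpace M] (μ : Measure M) [IsFiniteMeasure μ] (hμ : μ Set.univ ≠ 0)
    {N : ℕ} (v : M → Fin N → ℝ) (hv : Continuous v)
    (hv0 : ∀ i, (∫ x, v x i ∂μ) = 0)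
    (Z : (Fin N → ℝ) → ℝ)
    (hZ : ∀ m, Z m = ∫ x, Real.exp (-(∑ j, m j * v x j)) ∂μ)
    (Pi' : (Fin N → ℝ) → Measure M)
    (hPi : ∀ m, Pi' m = (ENNReal.ofReal (Z m))⁻¹ •
      μ.withDensity (fun x => ENNReal.ofReal (Real.exp (-(∑ j, m j * v x j)))))
    (Λ : ℝ)
    (hΛ : Λ = sSup {r : ℝ | ∃ m x : Fin N → ℝ, (∑ i, x i ^ 2 = 1) ∧
      r = ∑ i, ∑ j, x i * x j *
        ((∫ y, v y i * v y j ∂(Pi' m)) -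
          (∫ y, v y i ∂(Pi' m)) * (∫ y, v y j ∂(Pi' m)))})
    (β β0 : ℝ) (hβ0 : 0 ≤ β0) (hβ : -β0 ≤ β) :
    ∀ m : Fin N → ℝ,
      (1 - Λ * β0) * ∑ i, (m i) ^ 2 ≤
        ∑ i, m i * (m i - ∫ x, v x i ∂(Pi' (β • m))) := by
  intro m
  have : NeZero μ := ⟨fun h => hμ (by simp [h])⟩
  have hvi : ∀ i, Continuous fun x => v x i := fun i => (continuous_apply i).comp hv
  have hlin : ∀ p : Fin N → ℝ, Continuous fun x => ∑ j, p j * v x j := fun p =>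
    continuous_finsetSum _ fun j _ => continuous_const.mul (hvi j)
  have hPi_tilted : ∀ p, Pi' p = μ.tilted fun x => -(∑ j, p j * v x j) := fun p => by
    rw [hPi, hZ]
    exact smul_withDensity_exp_eq_tilted (hlin p).neg.rexp.integrable_of_compactSpace
  have : ∀ p, IsProbabilityMeasure (Pi' p) := fun p =>
    hPi_tilted p ▸ isProbabilityMeasure_tilted (hlin p).neg.rexp.integrable_of_compactSpace
  set w : M → ℝ := fun x => ∑ j, m j * v x j with hw_def
  have hexp : integrableExpSet w μ = Set.univ := integrableExpSet_eq_univ_of_continuous (hlin m)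
  have hPi_w : ∀ t, Pi' (t • m) = μ.tilted ((-t) * w ·) := fun t => by
    rw [hPi_tilted]
    congr with x
    simp only [w, Pi.smul_apply, smul_eq_mul, Finset.mul_sum, ← Finset.sum_neg_distrib]
    exact Finset.sum_congr rfl fun j _ => by ring
  obtain ⟨K, hK⟩ := (isCompact_range (continuous_finsetSum Finset.univ fun i _ =>
    (hvi i).pow 2)).bddAbove
  have hvar : ∀ t, Var[w; μ.tilted (t * w ·)] ≤ Λ * ∑ i, m i ^ 2 := fun t => by
    have := variance_le_sSup_mul (ν := Pi') (fun p i => (hvi i).memLp_of_compactSpace 2)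
      (fun y => hK ⟨y, rfl⟩) ((-t) • m) m
    rwa [← hΛ, hPi_w, neg_neg] at this
  have hmean : ∑ i, m i * ∫ x, v x i ∂(Pi' (β • m)) = deriv (cgf w μ) (-β) := by
    rw [← integral_sum_const_mul fun i => (hvi i).integrable_of_compactSpace, hPi_w,
      ← integral_tilted_mul_self (by simp [hexp])]
  have hmean0 : deriv (cgf w μ) 0 = 0 := by
    rw [deriv_cgf_zero (by simp [hexp]), hw_def,
      integral_sum_const_mul fun i => (hvi i).integrable_of_compactSpace]
    simp [hv0]
  have key := deriv_cgf_le_deriv_cgf_zero_add hexp hvar hβ0 (neg_le.2 hβ)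
  rw [← hmean, hmean0] at key
  simp only [mul_sub, Finset.sum_sub_distrib, ← sq]
  linarith

/-- Under the assumptions of Statement 6 and `∫ v dμ = 0`,
`m ⬝ ∇J(m) ≥ (1 - Λβ₀)|m|²`, where `∇J(m) = m - Π(βm)(v)`. -/
theorem stmt7 {M : Type*} [MeasurableSpace M] [TopologicalSpace M] [BorelSpace M]
    [CompactSpace M] (μ : Measure M) [IsFiniteMeasure μ] (hμ : μ Set.univ ≠ 0)
    {N : ℕ} (v : M → Fin N → ℝ) (hv : Continuous v)
    (hv0 : ∀ i, (∫ x, v x i ∂μ) = 0)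
    (Z : (Fin N → ℝ) → ℝ)
    (hZ : ∀ m, Z m = ∫ x, Real.exp (-(∑ j, m j * v x j)) ∂μ)
    (Pi' : (Fin N → ℝ) → Measure M)
    (hPi : ∀ m, Pi' m = (ENNReal.ofReal (Z m))⁻¹ •
      μ.withDensity (fun x => ENNReal.ofReal (Real.exp (-(∑ j, m j * v x j)))))
    (Λ : ℝ)
    (hΛ : Λ = sSup {r : ℝ | ∃ m x : Fin N → ℝ, (∑ i, x i ^ 2 = 1) ∧
      r = ∑ i, ∑ j, x i * x j *
        ((∫ y, v y i * v y j ∂(Pi' m)) -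
          (∫ y, v y i ∂(Pi' m)) * (∫ y, v y j ∂(Pi' m)))})
    (hΛpos : 0 < Λ)
    (β β0 : ℝ) (hβ0 : 0 ≤ β0) (hβ0Λ : β0 < 1 / Λ) (hβ : -β0 ≤ β) :
    ∀ m : Fin N → ℝ,
      (1 - Λ * β0) * ∑ i, (m i) ^ 2 ≤
        ∑ i, m i * (m i - ∫ x, v x i ∂(Pi' (β • m))) :=
  stmt7_general μ hμ v hv hv0 Z hZ Pi' hPi Λ hΛ β β0 hβ0 hβ
end

section
/- With $H$ as above, for all $r>0$ one has the strict Cauchy–Schwarz inequality $H'(r)^2 < H(r)\,H''(r)$; equivalently, $\rho'(r)>0$ where $\rho(r)=H'(r)/H(r)$. -/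
/-! With the weight `w(x) = e^{-r cos x} sin^{n-1} x`, which is positive on `(0, π)`, the functions
`H`, `-H1`, `H2` are the moments `∫ cos^j x w(x) dx`, `j = 0, 1, 2`. The quadratic
`t ↦ ∫ (cos x + t)² w(x) dx` is strictly positive, since its integrand vanishes at most at one
point of `(0, π)` (`cos` is injective there), so its discriminant `4 (H1² - H H2)` is negative.
Differentiating under the integral sign gives `H' = H1` and `H1' = H2`, hence
`(H1 / H)' = (H H2 - H1²) / H² > 0`. -/

open intervalIntegral Real MeasureTheory Set
open scoped Interval

theorem hasDerivAt_integral_pow_mul_exp_neg_mul {a b : ℝ} {c v : ℝ → ℝ} (hc : Continuous c)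
    (hv : Continuous v) (j : ℕ) (r : ℝ) :
    HasDerivAt (fun s => ∫ x in a..b, c x ^ j * exp (-(s * c x)) * v x)
      (-∫ x in a..b, c x ^ (j + 1) * exp (-(r * c x)) * v x) r := by
  set F' : ℝ → ℝ → ℝ := fun s x => -(c x ^ (j + 1) * exp (-(s * c x)) * v x)
  obtain ⟨C, hC⟩ := (isCompact_closedBall r 1).prod isCompact_uIcc
    |>.exists_bound_of_continuousOn (f := fun p : ℝ × ℝ => F' p.1 p.2) (by fun_prop)
  have hderiv : ∀ x s, HasDerivAt (fun s => c x ^ j * exp (-(s * c x)) * v x) (F' s x) s :=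
    fun x s => ((((hasDerivAt_id s).mul_const (c x)).neg.exp.const_mul (c x ^ j)).mul_const
      (v x)).congr_deriv (by simp only [F', Pi.neg_apply, id]; ring)
  have key := hasDerivAt_integral_of_dominated_loc_of_deriv_le (μ := volume) (a := a) (b := b)
    (F' := F') (bound := fun _ => C) (Metric.closedBall_mem_nhds r one_pos)
    (.of_forall fun s => (by fun_prop : Continuous _).aestronglyMeasurable)
    ((by fun_prop : Continuous _).intervalIntegrable a b)
    (by fun_prop : Continuous (F' r)).aestronglyMeasurable
    (.of_forall fun x hx s hs => hC (s, x) ⟨hs, uIoc_subset_uIcc hx⟩)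
    intervalIntegrable_const (.of_forall fun x _ s _ => hderiv x s)
  simpa only [F', intervalIntegral.integral_neg] using key.2

theorem integral_sq_cos_add_mul_pos {w : ℝ → ℝ} (hw : IntervalIntegrable w volume 0 π)
    (hpos : ∀ x ∈ Ioo 0 π, 0 < w x) (t : ℝ) : 0 < ∫ x in 0..π, (cos x + t) ^ 2 * w x := by
  set S := {x ∈ Ioo 0 π | cos x + t = 0}
  have hS : S.Subsingleton := fun x hx y hy =>
    injOn_cos (Ioo_subset_Icc_self hx.1) (Ioo_subset_Icc_self hy.1) (by linarith [hx.2, hy.2])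
  have hsupp : Ioo 0 π \ S ⊆ Function.support (fun x => (cos x + t) ^ 2 * w x) ∩ Ioc 0 π :=
    fun x ⟨hx, hxS⟩ => ⟨(mul_pos (pow_two_pos_of_ne_zero fun h => hxS ⟨hx, h⟩) (hpos x hx)).ne',
      Ioo_subset_Ioc_self hx⟩
  have hnonneg : 0 ≤ᵐ[volume.restrict (Ι 0 π)] fun x => (cos x + t) ^ 2 * w x := by
    rw [uIoc_of_le pi_pos.le]
    refine ae_restrict_of_ae_eq_of_ae_restrict Ioo_ae_eq_Ioc ?_
    rw [ae_restrict_iff' measurableSet_Ioo]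
    filter_upwards with x hx using mul_nonneg (sq_nonneg _) (hpos x hx).le
  rw [integral_pos_iff_support_of_nonneg_ae' hnonneg
    (hw.continuousOn_mul (by fun_prop))]
  refine ⟨pi_pos, ?_⟩
  calc 0 < volume (Ioo 0 π) := by simp [pi_pos]
    _ = volume (Ioo 0 π \ S) := (measure_sdiff_null (hS.measure_zero _)).symm
    _ ≤ _ := measure_mono hsupp

theorem sq_integral_cos_mul_lt {w : ℝ → ℝ} (hw : IntervalIntegrable w volume 0 π)
    (hpos : ∀ x ∈ Ioo 0 π, 0 < w x) :
    (∫ x in 0..π, cos x * w x) ^ 2 < (∫ x in 0..π, w x) * ∫ x in 0..π, cos x ^ 2 * w x := by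
  set A := ∫ x in 0..π, w x
  set B := ∫ x in 0..π, cos x * w x
  set C := ∫ x in 0..π, cos x ^ 2 * w x
  have hA : 0 < A := intervalIntegral_pos_of_pos_on hw hpos pi_pos
  have hint : ∀ j : ℕ, IntervalIntegrable (fun x => cos x ^ j * w x) volume 0 π :=
    fun j => hw.continuousOn_mul (by fun_prop)
  have hquad : ∀ t, 0 < A * (t * t) + 2 * B * t + C := fun t => by
    have hexpand : ∫ x in 0..π, (cos x + t) ^ 2 * w x = A * (t * t) + 2 * B * t + C :=
      calc ∫ x in 0..π, (cos x + t) ^ 2 * w x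
          = ∫ x in 0..π, cos x ^ 2 * w x + 2 * t * (cos x ^ 1 * w x) + t * t * (cos x ^ 0 * w x) :=
            integral_congr fun x _ => by ring
        _ = A * (t * t) + 2 * B * t + C := by
          rw [integral_add ((hint 2).add ((hint 1).const_mul _)) ((hint 0).const_mul _),
            integral_add (hint 2) ((hint 1).const_mul _), intervalIntegral.integral_const_mul,
            intervalIntegral.integral_const_mul]
          simp only [pow_one, pow_zero, one_mul]
          ring
    exact hexpand ▸ integral_sq_cos_add_mul_pos hw hpos t
  have hdiscrim := discrim_lt_zero hA.ne' hquad
  rw [discrim] at hdiscrim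
  linarith

theorem stmt10_general (n : ℕ) (H H1 H2 : ℝ → ℝ)
    (hH : ∀ r, H r = ∫ x in (0:ℝ)..π, Real.exp (-(r * Real.cos x)) * (Real.sin x) ^ (n - 1))
    (hH1 : ∀ r, H1 r =
      -∫ x in (0:ℝ)..π, Real.cos x * Real.exp (-(r * Real.cos x)) * (Real.sin x) ^ (n - 1))
    (hH2 : ∀ r, H2 r =
      ∫ x in (0:ℝ)..π, (Real.cos x) ^ 2 * Real.exp (-(r * Real.cos x)) * (Real.sin x) ^ (n - 1)) :
    ∀ r : ℝ, 0 < r →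
      (H1 r) ^ 2 < H r * H2 r ∧ 0 < deriv (fun s => H1 s / H s) r := by
  intro r _
  set w : ℝ → ℝ := fun x => exp (-(r * cos x)) * sin x ^ (n - 1)
  have hw : IntervalIntegrable w volume 0 π := (by fun_prop : Continuous w).intervalIntegrable 0 π
  have hwpos : ∀ x ∈ Ioo 0 π, 0 < w x := fun x hx => by
    have := sin_pos_of_pos_of_lt_pi hx.1 hx.2
    positivity
  have hHpos : 0 < H r := hH r ▸ intervalIntegral_pos_of_pos_on hw hwpos pi_pos
  have hCS : H1 r ^ 2 < H r * H2 r := by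
    simpa only [hH, hH1, hH2, neg_sq, mul_assoc] using sq_integral_cos_mul_lt hw hwpos
  have hsin : Continuous fun x => sin x ^ (n - 1) := by fun_prop
  have hdH : HasDerivAt H (H1 r) r := by
    simpa only [pow_zero, one_mul, zero_add, pow_one, ← hH, ← hH1] using
      hasDerivAt_integral_pow_mul_exp_neg_mul (a := 0) (b := π) continuous_cos hsin 0 r
  have hdH1 : HasDerivAt H1 (H2 r) r := by
    simpa only [Pi.neg_def, pow_one, Nat.reduceAdd, neg_neg, ← hH1, ← hH2] using
      (hasDerivAt_integral_pow_mul_exp_neg_mul (a := 0) (b := π) continuous_cos hsin 1 r).neg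
  have hρ : HasDerivAt (fun s => H1 s / H s) _ r := hdH1.div hdH hHpos.ne'
  refine ⟨hCS, ?_⟩
  rw [hρ.deriv]
  exact div_pos (by nlinarith) (by positivity)

/-- Strict Cauchy–Schwarz for `H`: for all `r > 0`,
`H'(r)² < H(r) H''(r)`; equivalently `ρ'(r) > 0` where `ρ = H'/H`. -/
theorem stmt10 (n : ℕ) (hn : 1 ≤ n) (H H1 H2 : ℝ → ℝ)
    (hH : ∀ r, H r = ∫ x in (0:ℝ)..π, Real.exp (-(r * Real.cos x)) * (Real.sin x) ^ (n - 1))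
    (hH1 : ∀ r, H1 r =
      -∫ x in (0:ℝ)..π, Real.cos x * Real.exp (-(r * Real.cos x)) * (Real.sin x) ^ (n - 1))
    (hH2 : ∀ r, H2 r =
      ∫ x in (0:ℝ)..π, (Real.cos x) ^ 2 * Real.exp (-(r * Real.cos x)) * (Real.sin x) ^ (n - 1)) :
    ∀ r : ℝ, 0 < r →
      (H1 r) ^ 2 < H r * H2 r ∧ 0 < deriv (fun s => H1 s / H s) r :=
  stmt10_general n H H1 H2 hH hH1 hH2
end

section
/- With $H$ and $\rho=H'/H$ as above, the function $r\mapsto \rho(r)/r$ is strictly decreasing on $(0,\infty)$; equivalently, $r\mapsto H''(r)/H(r)$ is strictly increasing, and consequently $0<\rho'(r)<\rho(r)/r$ for all $r>0$. -/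
/-!
Put `M k r = ∫₀^π cos^k x · e^{-r cos x} sin^m x dx` with `m = n - 1`, so that `H = M 0`,
`H' = -M 1`, `H'' = M 2` and `(M k)' = -M (k + 1)`. Integrating `(e^{-r cos x} sin^{m+1} x)'`
over `[0, π]` gives `(m + 1) M 1 = r (M 2 - M 0)`, i.e. `ρ(r) = r g(r)` with
`g = (1 - M 2 / M 0) / (m + 1)`. Hence `ρ/r = g` and `ρ' = g + r g'`, and everything reduces to
`ρ' = (M 0 M 2 - M 1²) / M 0² > 0` and to `(M 2 / M 0)' = (M 1 M 2 - M 0 M 3) / M 0² > 0`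
for `r > 0`.

Writing `c = cos` and `w(x) = e^{-r c(x)} sin^m x`, both numerators are covariances:
`2 (M 0 M j - M 1 M (j-1)) = ∬ (c x - c y)(c x ^ (j-1) - c y ^ (j-1)) w x w y` for `j = 2, 3`.
For `j = 2` the integrand is nonnegative. For `j = 3` it is not, but averaging it with its image
under `(x, y) ↦ (π - x, π - y)`, which flips the sign of `c`, gives
`-(c x - c y)² · s sinh (r s) · sin^m x sin^m y` with `s = c x + c y`, which is nonpositive.
-/

open intervalIntegral Real Set Function

theorem hasDerivAt_intervalIntegral_of_continuous {F F' : ℝ → ℝ → ℝ} {a b s₀ : ℝ}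
    (hF : Continuous (uncurry F)) (hF' : Continuous (uncurry F'))
    (hderiv : ∀ s x, HasDerivAt (F · x) (F' s x) s) :
    HasDerivAt (fun s => ∫ x in a..b, F s x) (∫ x in a..b, F' s₀ x) s₀ := by
  obtain ⟨C, hC⟩ :=
    (isCompact_closedBall s₀ 1 |>.prod isCompact_uIcc).exists_bound_of_continuousOn
      hF'.continuousOn
  exact (hasDerivAt_integral_of_dominated_loc_of_deriv_le (bound := fun _ => C)
    (Metric.ball_mem_nhds s₀ one_pos)
    (.of_forall fun s => (hF.uncurry_left s).aestronglyMeasurable)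
    ((hF.uncurry_left s₀).intervalIntegrable _ _) (hF'.uncurry_left s₀).aestronglyMeasurable
    (.of_forall fun x hx s hs =>
      hC (s, x) ⟨Metric.ball_subset_closedBall hs, uIoc_subset_uIcc hx⟩)
    intervalIntegrable_const (.of_forall fun x _ s _ => hderiv s x)).2

section IteratedIntegral

variable {a b c d : ℝ}

theorem integral_integral_mul (f g : ℝ → ℝ) :
    ∫ x in a..b, ∫ y in c..d, f x * g y = (∫ x in a..b, f x) * ∫ y in c..d, g y := by
  simp only [intervalIntegral.integral_const_mul, intervalIntegral.integral_mul_const]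

theorem integral_integral_add {F G : ℝ → ℝ → ℝ} (hF : Continuous (uncurry F))
    (hG : Continuous (uncurry G)) :
    ∫ x in a..b, ∫ y in c..d, (F x y + G x y) =
      (∫ x in a..b, ∫ y in c..d, F x y) + ∫ x in a..b, ∫ y in c..d, G x y := by
  simp_rw [integral_add ((hF.uncurry_left _).intervalIntegrable _ _)
    ((hG.uncurry_left _).intervalIntegrable _ _)]
  exact integral_add
    ((continuous_parametric_intervalIntegral_of_continuous' hF _ _).intervalIntegrable _ _)
    ((continuous_parametric_intervalIntegral_of_continuous' hG _ _).intervalIntegrable _ _)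

theorem integral_integral_sub {F G : ℝ → ℝ → ℝ} (hF : Continuous (uncurry F))
    (hG : Continuous (uncurry G)) :
    ∫ x in a..b, ∫ y in c..d, (F x y - G x y) =
      (∫ x in a..b, ∫ y in c..d, F x y) - ∫ x in a..b, ∫ y in c..d, G x y := by
  simp_rw [integral_sub ((hF.uncurry_left _).intervalIntegrable _ _)
    ((hG.uncurry_left _).intervalIntegrable _ _)]
  exact integral_sub
    ((continuous_parametric_intervalIntegral_of_continuous' hF _ _).intervalIntegrable _ _)
    ((continuous_parametric_intervalIntegral_of_continuous' hG _ _).intervalIntegrable _ _)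

theorem integral_integral_comp_sub_left (F : ℝ → ℝ → ℝ) :
    ∫ x in a..b, ∫ y in c..d, F (a + b - x) (c + d - y) =
      ∫ x in a..b, ∫ y in c..d, F x y := by
  have hinner : ∀ x, ∫ y in c..d, F x (c + d - y) = ∫ y in c..d, F x y := fun x => by
    rw [integral_comp_sub_left (F x)]
    simp
  simp_rw [hinner]
  rw [integral_comp_sub_left (fun x => ∫ y in c..d, F x y)]
  simp

theorem integral_integral_pos {F : ℝ → ℝ → ℝ} (hF : Continuous (uncurry F)) (hab : a < b)
    (hcd : c < d) (hF0 : ∀ x ∈ Icc a b, ∀ y ∈ Icc c d, 0 ≤ F x y) {x₀ y₀ : ℝ}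
    (hx₀ : x₀ ∈ Icc a b) (hy₀ : y₀ ∈ Icc c d) (hpos : 0 < F x₀ y₀) :
    0 < ∫ x in a..b, ∫ y in c..d, F x y :=
  integral_pos hab (continuous_parametric_intervalIntegral_of_continuous' hF _ _).continuousOn
    (fun x hx => integral_nonneg hcd.le (hF0 x (Ioc_subset_Icc_self hx)))
    ⟨x₀, hx₀, integral_pos hcd (hF.uncurry_left x₀).continuousOn
      (fun y hy => hF0 x₀ hx₀ y (Ioc_subset_Icc_self hy)) ⟨y₀, hy₀, hpos⟩⟩

theorem integral_integral_sub_mul_sub {f g φ : ℝ → ℝ} (hf : Continuous f) (hg : Continuous g)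
    (hφ : Continuous φ) :
    ∫ x in a..b, ∫ y in a..b, (f x - f y) * (g x - g y) * (φ x * φ y) =
      2 * ((∫ x in a..b, φ x) * (∫ x in a..b, f x * g x * φ x) -
        (∫ x in a..b, f x * φ x) * ∫ x in a..b, g x * φ x) := by
  have hsplit : ∀ x y, (f x - f y) * (g x - g y) * (φ x * φ y) =
      (f x * g x * φ x) * φ y + φ x * (f y * g y * φ y) -
        ((f x * φ x) * (g y * φ y) + (g x * φ x) * (f y * φ y)) := fun x y => by ring
  simp_rw [hsplit]
  rw [integral_integral_sub, integral_integral_add, integral_integral_add]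
  · simp only [integral_integral_mul]
    ring
  all_goals fun_prop

end IteratedIntegral

theorem deriv_lt_div_self_of_eq_mul {f g : ℝ → ℝ} {g' r : ℝ} (hfg : ∀ s, f s = s * g s)
    (hg : HasDerivAt g g' r) (hg' : g' < 0) (hr : 0 < r) : deriv f r < f r / r := by
  have hf : HasDerivAt f (1 * g r + r * g') r := by
    rw [funext hfg]
    exact (hasDerivAt_id' r).mul hg
  rw [hf.deriv, hfg, mul_div_cancel_left₀ _ hr.ne']
  nlinarith

theorem mul_sinh_mul_nonneg {r : ℝ} (hr : 0 ≤ r) (t : ℝ) : 0 ≤ t * sinh (r * t) := by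
  rcases le_total 0 t with ht | ht
  · exact mul_nonneg ht (sinh_nonneg_iff.2 (mul_nonneg hr ht))
  · exact mul_nonneg_of_nonpos_of_nonpos ht
      (sinh_nonpos_iff.2 (mul_nonpos_of_nonneg_of_nonpos hr ht))

noncomputable def cosMoment (m k : ℕ) (r : ℝ) : ℝ :=
  ∫ x in (0:ℝ)..π, cos x ^ k * exp (-(r * cos x)) * sin x ^ m

section cosMoment

variable (m : ℕ)

theorem hasDerivAt_cosMoment (k : ℕ) (r : ℝ) :
    HasDerivAt (cosMoment m k) (-cosMoment m (k + 1) r) r := by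
  rw [cosMoment, ← integral_neg]
  refine hasDerivAt_intervalIntegral_of_continuous
    (F := fun s x => cos x ^ k * exp (-(s * cos x)) * sin x ^ m)
    (F' := fun s x => -(cos x ^ (k + 1) * exp (-(s * cos x)) * sin x ^ m))
    (by fun_prop) (by fun_prop) fun s x => ?_
  have hexp : HasDerivAt (fun s => exp (-(s * cos x))) (exp (-(s * cos x)) * -(1 * cos x)) s :=
    ((hasDerivAt_id' s).mul_const (cos x)).neg.exp
  exact ((hexp.const_mul (cos x ^ k)).mul_const (sin x ^ m)).congr_deriv (by ring)

theorem cosMoment_zero_pos (r : ℝ) : 0 < cosMoment m 0 r := by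
  refine integral_pos pi_pos (by fun_prop) (fun x hx => ?_)
    ⟨π / 2, ⟨by positivity, by linarith [pi_pos]⟩, by simp⟩
  have := sin_nonneg_of_nonneg_of_le_pi hx.1.le hx.2
  positivity

theorem succ_mul_cosMoment_one (r : ℝ) :
    (m + 1) * cosMoment m 1 r = r * (cosMoment m 2 r - cosMoment m 0 r) := by
  have hderiv : ∀ x ∈ uIcc 0 π, HasDerivAt (fun x => exp (-(r * cos x)) * sin x ^ (m + 1))
      ((m + 1) * (cos x ^ 1 * exp (-(r * cos x)) * sin x ^ m) -
        r * (cos x ^ 2 * exp (-(r * cos x)) * sin x ^ m -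
          cos x ^ 0 * exp (-(r * cos x)) * sin x ^ m)) x := by
    intro x _
    have hexp : HasDerivAt (fun x => exp (-(r * cos x))) (exp (-(r * cos x)) * -(r * -sin x)) x :=
      ((hasDerivAt_cos x).const_mul r).neg.exp
    have hpow : HasDerivAt (fun x => sin x ^ (m + 1)) ((m + 1 : ℕ) * sin x ^ m * cos x) x :=
      (Real.hasDerivAt_sin x).pow (m + 1)
    refine (hexp.mul hpow).congr_deriv ?_
    have hpyth := Real.sin_sq_add_cos_sq x
    push_cast
    linear_combination r * exp (-(r * cos x)) * sin x ^ m * hpyth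
  have hint := integral_eq_sub_of_hasDerivAt hderiv
    (by apply Continuous.intervalIntegrable; fun_prop)
  rw [integral_sub, integral_const_mul, integral_const_mul, integral_sub] at hint
  · simp only [sin_pi, sin_zero, zero_pow m.succ_ne_zero, mul_zero, sub_self] at hint
    unfold cosMoment
    linarith
  all_goals apply Continuous.intervalIntegrable; fun_prop

theorem cosMoment_one_sq_lt (r : ℝ) :
    cosMoment m 1 r ^ 2 < cosMoment m 0 r * cosMoment m 2 r := by
  set φ := fun x => exp (-(r * cos x)) * sin x ^ m
  have hcov := integral_integral_sub_mul_sub (a := 0) (b := π) continuous_cos continuous_cos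
    (by fun_prop : Continuous φ)
  have e0 : ∫ x in (0:ℝ)..π, φ x = cosMoment m 0 r := by simp [φ, cosMoment]
  have e1 : ∫ x in (0:ℝ)..π, cos x * φ x = cosMoment m 1 r := by
    simp [φ, cosMoment, mul_assoc]
  have e2 : ∫ x in (0:ℝ)..π, cos x * cos x * φ x = cosMoment m 2 r :=
    integral_congr fun x _ => by simp only [φ]; ring
  have hpos : 0 < ∫ x in (0:ℝ)..π, ∫ y in (0:ℝ)..π,
      (cos x - cos y) * (cos x - cos y) * (φ x * φ y) := by
    refine integral_integral_pos (by fun_prop) pi_pos pi_pos (fun x hx y hy => ?_)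
      (x₀ := π / 2) (y₀ := π / 3) ⟨by positivity, by linarith [pi_pos]⟩
      ⟨by positivity, by linarith [pi_pos]⟩ ?_
    · have := sin_nonneg_of_nonneg_of_le_pi hx.1 hx.2
      have := sin_nonneg_of_nonneg_of_le_pi hy.1 hy.2
      have := mul_self_nonneg (cos x - cos y)
      positivity
    · have := sin_pos_of_pos_of_lt_pi (x := π / 3) (by positivity) (by linarith [pi_pos])
      simp only [φ, cos_pi_div_two, cos_pi_div_three, sin_pi_div_two]
      positivity
  rw [hcov, e0, e1, e2] at hpos
  linarith

theorem cosMoment_zero_mul_three_lt {r : ℝ} (hr : 0 < r) :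
    cosMoment m 0 r * cosMoment m 3 r < cosMoment m 1 r * cosMoment m 2 r := by
  set φ := fun x => exp (-(r * cos x)) * sin x ^ m
  set K := fun x y => (cos x - cos y) * (cos x ^ 2 - cos y ^ 2) * (φ x * φ y)
  set L := fun x y => (cos x - cos y) ^ 2 * ((cos x + cos y) * sinh (r * (cos x + cos y))) *
    (sin x ^ m * sin y ^ m)
  have hcov : ∫ x in (0:ℝ)..π, ∫ y in (0:ℝ)..π, K x y =
      2 * (cosMoment m 0 r * cosMoment m 3 r - cosMoment m 1 r * cosMoment m 2 r) := by
    refine (integral_integral_sub_mul_sub (g := fun x => cos x ^ 2) continuous_cos (by fun_prop)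
      (by fun_prop : Continuous φ)).trans ?_
    have e0 : ∫ x in (0:ℝ)..π, φ x = cosMoment m 0 r := by simp [φ, cosMoment]
    have e1 : ∫ x in (0:ℝ)..π, cos x * φ x = cosMoment m 1 r := by
      simp [φ, cosMoment, mul_assoc]
    have e2 : ∫ x in (0:ℝ)..π, cos x ^ 2 * φ x = cosMoment m 2 r := by
      simp [φ, cosMoment, mul_assoc]
    have e3 : ∫ x in (0:ℝ)..π, cos x * cos x ^ 2 * φ x = cosMoment m 3 r :=
      integral_congr fun x _ => by simp only [φ]; ring
    rw [e0, e1, e2, e3]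
  have hrefl : ∫ x in (0:ℝ)..π, ∫ y in (0:ℝ)..π, K (π - x) (π - y) =
      ∫ x in (0:ℝ)..π, ∫ y in (0:ℝ)..π, K x y := by
    simpa using integral_integral_comp_sub_left K (a := 0) (b := π) (c := 0) (d := π)
  have hsymm : ∀ x y, K x y + K (π - x) (π - y) = -2 * L x y := by
    intro x y
    simp only [K, L, φ, cos_pi_sub, sin_pi_sub, sinh_eq, mul_add, neg_add, exp_add, mul_neg,
      exp_neg]
    field_simp
    ring
  have hLpos : 0 < ∫ x in (0:ℝ)..π, ∫ y in (0:ℝ)..π, L x y := by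
    refine integral_integral_pos (by fun_prop) pi_pos pi_pos (fun x hx y hy => ?_)
      (x₀ := π / 3) (y₀ := π / 2) ⟨by positivity, by linarith [pi_pos]⟩
      ⟨by positivity, by linarith [pi_pos]⟩ ?_
    · have := sin_nonneg_of_nonneg_of_le_pi hx.1 hx.2
      have := sin_nonneg_of_nonneg_of_le_pi hy.1 hy.2
      have := mul_sinh_mul_nonneg hr.le (cos x + cos y)
      positivity
    · have := sin_pos_of_pos_of_lt_pi (x := π / 3) (by positivity) (by linarith [pi_pos])
      have := sinh_pos_iff.2 (by positivity : 0 < r * (1 / 2 + 0))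
      simp only [L, cos_pi_div_two, cos_pi_div_three, sin_pi_div_two]
      positivity
  have hsum : 2 * (2 * (cosMoment m 0 r * cosMoment m 3 r - cosMoment m 1 r * cosMoment m 2 r)) =
      -2 * ∫ x in (0:ℝ)..π, ∫ y in (0:ℝ)..π, L x y := by
    rw [two_mul (2 * _), ← hcov]
    nth_rw 2 [← hrefl]
    rw [← integral_integral_add (by fun_prop) (by fun_prop)]
    simp only [hsymm, intervalIntegral.integral_const_mul]
  linarith

theorem hasDerivAt_cosMoment_two_div_zero (r : ℝ) :
    HasDerivAt (fun s => cosMoment m 2 s / cosMoment m 0 s)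
      ((cosMoment m 1 r * cosMoment m 2 r - cosMoment m 0 r * cosMoment m 3 r) /
        cosMoment m 0 r ^ 2) r :=
  ((hasDerivAt_cosMoment m 2 r).div (hasDerivAt_cosMoment m 0 r)
    (cosMoment_zero_pos m r).ne').congr_deriv (by ring)

theorem strictMonoOn_cosMoment_two_div_zero :
    StrictMonoOn (fun s => cosMoment m 2 s / cosMoment m 0 s) (Ioi 0) := by
  refine strictMonoOn_of_deriv_pos (convex_Ioi 0)
    (fun r _ => (hasDerivAt_cosMoment_two_div_zero m r).continuousAt.continuousWithinAt)
    fun r hr => ?_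
  rw [interior_Ioi] at hr
  rw [(hasDerivAt_cosMoment_two_div_zero m r).deriv]
  exact div_pos (sub_pos.2 (cosMoment_zero_mul_three_lt m hr)) (pow_pos (cosMoment_zero_pos m r) 2)

theorem hasDerivAt_neg_cosMoment_one_div_zero (r : ℝ) :
    HasDerivAt (fun s => -cosMoment m 1 s / cosMoment m 0 s)
      ((cosMoment m 0 r * cosMoment m 2 r - cosMoment m 1 r ^ 2) / cosMoment m 0 r ^ 2) r :=
  ((hasDerivAt_cosMoment m 1 r).neg.div (hasDerivAt_cosMoment m 0 r)
    (cosMoment_zero_pos m r).ne').congr_deriv (by simp only [Pi.neg_apply]; ring)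

theorem neg_cosMoment_one_div_zero (r : ℝ) :
    -cosMoment m 1 r / cosMoment m 0 r =
      r * ((1 - cosMoment m 2 r / cosMoment m 0 r) / (m + 1)) := by
  have hibp := succ_mul_cosMoment_one m r
  have hM0 := (cosMoment_zero_pos m r).ne'
  field_simp
  linear_combination -hibp

end cosMoment

/-- `r ↦ ρ(r)/r` is strictly decreasing on `(0,∞)`; equivalently
`r ↦ H''(r)/H(r)` is strictly increasing, and `0 < ρ'(r) < ρ(r)/r` for all `r > 0`,
where `ρ = H'/H`. -/
theorem stmt12 (n : ℕ) (hn : 1 ≤ n) (H H1 H2 ρ : ℝ → ℝ)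
    (hH : ∀ r, H r = ∫ x in (0:ℝ)..π, Real.exp (-(r * Real.cos x)) * (Real.sin x) ^ (n - 1))
    (hH1 : ∀ r, H1 r =
      -∫ x in (0:ℝ)..π, Real.cos x * Real.exp (-(r * Real.cos x)) * (Real.sin x) ^ (n - 1))
    (hH2 : ∀ r, H2 r =
      ∫ x in (0:ℝ)..π, (Real.cos x) ^ 2 * Real.exp (-(r * Real.cos x)) * (Real.sin x) ^ (n - 1))
    (hρ : ∀ r, ρ r = H1 r / H r) :
    StrictAntiOn (fun r => ρ r / r) (Set.Ioi 0) ∧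
    StrictMonoOn (fun r => H2 r / H r) (Set.Ioi 0) ∧
    ∀ r : ℝ, 0 < r → 0 < deriv ρ r ∧ deriv ρ r < ρ r / r := by
  obtain ⟨m, rfl⟩ : ∃ m, n = m + 1 := ⟨n - 1, by omega⟩
  have hH0 : H = cosMoment m 0 := funext fun r => by simp [hH, cosMoment]
  have hH2' : H2 = cosMoment m 2 := funext fun r => by simp [hH2, cosMoment]
  have hρM : ρ = fun r => -cosMoment m 1 r / cosMoment m 0 r :=
    funext fun r => by simp [hρ, hH1, hH0, cosMoment]
  subst hH0 hH2'
  set g := fun r => (1 - cosMoment m 2 r / cosMoment m 0 r) / (m + 1)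
  have hρg : ∀ r, ρ r = r * g r := by simp [hρM, g, neg_cosMoment_one_div_zero]
  have hg_anti : StrictAntiOn g (Ioi 0) := fun a ha b hb hab =>
    div_lt_div_of_pos_right (sub_lt_sub_left (strictMonoOn_cosMoment_two_div_zero m ha hb hab) 1)
      (by positivity)
  refine ⟨hg_anti.congr fun r hr => ?_, strictMonoOn_cosMoment_two_div_zero m,
    fun r hr => ⟨?_, ?_⟩⟩
  · simp [hρg, (mem_Ioi.1 hr).ne']
  · rw [hρM, (hasDerivAt_neg_cosMoment_one_div_zero m r).deriv]
    exact div_pos (by nlinarith [cosMoment_one_sq_lt m r]) (pow_pos (cosMoment_zero_pos m r) 2)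
  · have hq' := div_pos (sub_pos.2 (cosMoment_zero_mul_three_lt m hr))
      (pow_pos (cosMoment_zero_pos m r) 2)
    exact deriv_lt_div_self_of_eq_mul hρg
      (((hasDerivAt_cosMoment_two_div_zero m r).const_sub 1).div_const _)
      (div_neg_of_neg_of_pos (neg_neg_of_pos hq') (by positivity)) hr
end

section
/- On $\S^n$ with $v(x)=x$, define $\lambda(r) = \frac{2\rho(r)}{r} - \rho'(r)$ for $r>0$ and $\lambda(0)=\frac{1}{n+1}$. Then for all $r>0$, $\frac{\rho(r)}{r} < \lambda(r) < \frac{2\rho(r)}{r}$, and $\Lambda := \max_{r\ge0}\lambda(r)$ satisfies $\frac{1}{n+1} \le \Lambda < \frac{2}{n+1}$. -/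
/-!
The bounds on `λ(r)` are a rearrangement of `0 < ρ' < ρ/r`. For the maximum, differentiation
under the integral sign makes `ρ` of class `C¹`. Since `ρ(r)/r` has a finite limit at `0⁺`,
`ρ(0) = 0` and `ρ'(0) = 1/(n+1)`, so `λ` is continuous on `[0, ∞)`. As `ρ ≤ 1`,
`λ(r) < 2ρ(r)/r ≤ 2/r` falls below `λ(0)` for large `r`, so `λ` attains its maximum. At a positive
maximiser `r₀`, `λ(r₀) < 2ρ(r₀)/r₀ < 2/(n+1)`, because `ρ/r` decreases strictly from `1/(n+1)`.
-/

open intervalIntegral Real Filter Set Topology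

section ExpCosIntegral

variable {f : ℝ → ℝ} {a b : ℝ}

theorem hasDerivAt_integral_exp_neg_mul_cos_mul (hf : Continuous f) (r : ℝ) :
    HasDerivAt (fun s => ∫ x in a..b, exp (-(s * cos x)) * f x)
      (∫ x in a..b, exp (-(r * cos x)) * (-cos x * f x)) r := by
  refine (intervalIntegral.hasDerivAt_integral_of_dominated_loc_of_deriv_le
    (μ := MeasureTheory.volume)
    (F := fun s x => exp (-(s * cos x)) * f x)
    (F' := fun s x => exp (-(s * cos x)) * (-cos x * f x))
    (bound := fun x => exp (|r| + 1) * |f x|) (Metric.ball_mem_nhds r one_pos)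
    (.of_forall fun s => (Continuous.aestronglyMeasurable (by fun_prop)))
    (Continuous.intervalIntegrable (by fun_prop) _ _)
    (Continuous.aestronglyMeasurable (by fun_prop)) ?_
    (Continuous.intervalIntegrable (by fun_prop) _ _) ?_).2
  · refine .of_forall fun x _ s hs => ?_
    have hs_abs : |s| ≤ |r| + 1 := by
      have := abs_sub_abs_le_abs_sub s r
      rw [Metric.mem_ball, Real.dist_eq] at hs
      linarith
    have hexp : -(s * cos x) ≤ |r| + 1 := calc
      -(s * cos x) ≤ |s| * |cos x| := (neg_le_abs _).trans (abs_mul _ _).le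
      _ ≤ (|r| + 1) * 1 := by gcongr; exact abs_cos_le_one x
      _ = |r| + 1 := mul_one _
    rw [norm_mul, norm_mul, norm_neg, Real.norm_of_nonneg (exp_pos _).le, Real.norm_eq_abs,
      Real.norm_eq_abs]
    calc exp (-(s * cos x)) * (|cos x| * |f x|) ≤ exp (|r| + 1) * (1 * |f x|) := by
          gcongr; exact abs_cos_le_one x
      _ = exp (|r| + 1) * |f x| := by rw [one_mul]
  · refine .of_forall fun x _ s _ => ?_
    exact ((((hasDerivAt_id' s).mul_const (cos x)).neg.exp).mul_const (f x)).congr_deriv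
      (by simp only [Pi.neg_apply]; ring)

theorem contDiff_one_integral_exp_neg_mul_cos_mul (hf : Continuous f) :
    ContDiff ℝ 1 (fun s => ∫ x in a..b, exp (-(s * cos x)) * f x) := by
  refine contDiff_one_iff_deriv.2
    ⟨fun r => (hasDerivAt_integral_exp_neg_mul_cos_mul hf r).differentiableAt, ?_⟩
  rw [funext fun r => (hasDerivAt_integral_exp_neg_mul_cos_mul (a := a) (b := b) hf r).deriv]
  exact continuous_parametric_intervalIntegral_of_continuous' (by fun_prop) a b

theorem neg_integral_exp_neg_mul_cos_mul_cos_mul_le (hab : a ≤ b) (hf : Continuous f)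
    (hf0 : ∀ x ∈ Icc a b, 0 ≤ f x) (r : ℝ) :
    -∫ x in a..b, exp (-(r * cos x)) * (cos x * f x) ≤ ∫ x in a..b, exp (-(r * cos x)) * f x := by
  rw [← integral_neg]
  refine integral_mono_on hab (Continuous.intervalIntegrable (by fun_prop) _ _)
    (Continuous.intervalIntegrable (by fun_prop) _ _) fun x hx => ?_
  have := mul_nonneg (mul_nonneg (exp_pos (-(r * cos x))).le (hf0 x hx))
    (by linarith [neg_one_le_cos x] : 0 ≤ 1 + cos x)
  linarith

theorem integral_exp_neg_mul_cos_mul_sin_pow_pos (r : ℝ) (k : ℕ) :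
    0 < ∫ x in (0:ℝ)..π, exp (-(r * cos x)) * sin x ^ k :=
  intervalIntegral_pos_of_pos_on (Continuous.intervalIntegrable (by fun_prop) _ _)
    (fun x hx => mul_pos (exp_pos _) (pow_pos (sin_pos_of_pos_of_lt_pi hx.1 hx.2) k)) pi_pos

end ExpCosIntegral

/-- The `ρ` of the statement: the mean of `-cos θ` under the density `∝ e^{-r cos θ} sin^{n-1} θ`
on `[0, π]`. -/
noncomputable def sphereRho (n : ℕ) (r : ℝ) : ℝ :=
  -(∫ x in (0:ℝ)..π, cos x * exp (-(r * cos x)) * sin x ^ (n - 1)) /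
    ∫ x in (0:ℝ)..π, exp (-(r * cos x)) * sin x ^ (n - 1)

theorem sphereRho_eq (n : ℕ) (r : ℝ) : sphereRho n r =
    -(∫ x in (0:ℝ)..π, exp (-(r * cos x)) * (cos x * sin x ^ (n - 1))) /
      ∫ x in (0:ℝ)..π, exp (-(r * cos x)) * sin x ^ (n - 1) := by
  simp only [sphereRho, mul_comm (cos _) (exp _), mul_assoc]

theorem contDiff_one_sphereRho (n : ℕ) : ContDiff ℝ 1 (sphereRho n) := by
  rw [funext (sphereRho_eq n)]
  exact (contDiff_one_integral_exp_neg_mul_cos_mul (by fun_prop)).neg.div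
    (contDiff_one_integral_exp_neg_mul_cos_mul (by fun_prop))
    fun r => (integral_exp_neg_mul_cos_mul_sin_pow_pos r _).ne'

theorem sphereRho_le_one (n : ℕ) (r : ℝ) : sphereRho n r ≤ 1 := by
  rw [sphereRho_eq, div_le_one (integral_exp_neg_mul_cos_mul_sin_pow_pos r _)]
  exact neg_integral_exp_neg_mul_cos_mul_cos_mul_le pi_pos.le (by fun_prop)
    (fun x hx => pow_nonneg (sin_nonneg_of_nonneg_of_le_pi hx.1 hx.2) _) r

theorem StrictAntiOn.lt_of_tendsto_nhdsGT {α β : Type*} [LinearOrder α] [TopologicalSpace α]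
    [OrderTopology α] [DenselyOrdered α] [NoMaxOrder α] [LinearOrder β] [TopologicalSpace β]
    [OrderClosedTopology β] {f : α → β} {a r : α} {L : β} (hf : StrictAntiOn f (Ioi a))
    (hlim : Tendsto f (𝓝[>] a) (𝓝 L)) (hr : a < r) : f r < L := by
  obtain ⟨m, ham, hmr⟩ := exists_between hr
  refine (hf ham hr hmr).trans_le (ge_of_tendsto hlim ?_)
  filter_upwards [Ioo_mem_nhdsGT ham] with t ht
  exact (hf ht.1 ham ht.2).le

section

variable {ρ lam : ℝ → ℝ} {L : ℝ}

theorem deriv_zero_eq_of_tendsto_div (hd : DifferentiableAt ℝ ρ 0)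
    (hlim : Tendsto (fun r => ρ r / r) (𝓝[>] 0) (𝓝 L)) : deriv ρ 0 = L := by
  have hρ0 : ρ 0 = 0 := by
    have h : Tendsto ρ (𝓝[>] 0) (𝓝 (0 * L)) := by
      refine ((tendsto_nhdsWithin_of_tendsto_nhds tendsto_id).mul hlim).congr' ?_
      filter_upwards [self_mem_nhdsWithin] with r (hr : 0 < r)
      exact mul_div_cancel₀ _ hr.ne'
    rw [zero_mul] at h
    exact tendsto_nhds_unique (hd.continuousAt.tendsto.mono_left nhdsWithin_le_nhds) h
  have hslope := (hasDerivWithinAt_iff_tendsto_slope' (s := Ioi 0) (lt_irrefl (0 : ℝ))).1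
    (hd.hasDerivAt.hasDerivWithinAt (s := Ioi 0))
  refine tendsto_nhds_unique hslope (hlim.congr fun r => ?_)
  rw [slope_def_field, hρ0, sub_zero, sub_zero]

theorem tendsto_two_mul_div_sub_deriv (hρ : ContDiff ℝ 1 ρ)
    (hlim : Tendsto (fun r => ρ r / r) (𝓝[>] 0) (𝓝 L)) :
    Tendsto (fun r => 2 * ρ r / r - deriv ρ r) (𝓝[>] 0) (𝓝 L) := by
  have hderiv : Tendsto (deriv ρ) (𝓝[>] 0) (𝓝 L) :=
    deriv_zero_eq_of_tendsto_div (hρ.differentiable one_ne_zero 0) hlim ▸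
      ((hρ.continuous_deriv le_rfl).tendsto 0).mono_left nhdsWithin_le_nhds
  have h := (hlim.const_mul 2).sub hderiv
  rw [two_mul, add_sub_cancel_right] at h
  simpa only [mul_div_assoc] using h

theorem continuousOn_Ici_of_eq_two_mul_div_sub_deriv (hρ : ContDiff ℝ 1 ρ)
    (hlim : Tendsto (fun r => ρ r / r) (𝓝[>] 0) (𝓝 L))
    (hlam : ∀ r, 0 < r → lam r = 2 * ρ r / r - deriv ρ r) (hlam0 : lam 0 = L) :
    ContinuousOn lam (Ici 0) := by
  intro r hr
  rcases (mem_Ici.1 hr).eq_or_lt with rfl | hr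
  · refine continuousWithinAt_Ioi_iff_Ici.1 ?_
    rw [ContinuousWithinAt, hlam0]
    refine (tendsto_two_mul_div_sub_deriv hρ hlim).congr' ?_
    filter_upwards [self_mem_nhdsWithin] with r hr using (hlam r hr).symm
  · refine ContinuousAt.continuousWithinAt
      (ContinuousAt.congr (f := fun s => 2 * ρ s / s - deriv ρ s) ?_ ?_)
    · exact ((continuous_const.mul hρ.continuous).continuousAt.div continuousAt_id hr.ne').sub
        (hρ.continuous_deriv le_rfl).continuousAt
    · filter_upwards [Ioi_mem_nhds hr] with s hs using (hlam s hs).symm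

theorem eventually_cocompact_le_of_lt_two_mul_div (hρ : ∀ r, ρ r ≤ 1)
    (hlam : ∀ r, 0 < r → lam r < 2 * ρ r / r) (hL : 0 < L) :
    ∀ᶠ r in cocompact ℝ ⊓ 𝓟 (Ici 0), lam r ≤ L := by
  filter_upwards [(tendsto_norm_cocompact_atTop.eventually_gt_atTop (2 / L)).filter_mono
    inf_le_left, mem_inf_of_right (mem_principal_self _)] with r hR (hr : 0 ≤ r)
  rw [Real.norm_of_nonneg hr, div_lt_iff₀ hL] at hR
  have hr : 0 < r := by nlinarith
  calc lam r ≤ 2 * ρ r / r := (hlam r hr).le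
    _ ≤ 2 / r := by gcongr; linarith [hρ r]
    _ ≤ L := by rw [div_le_iff₀ hr]; linarith

end

theorem stmt16_general (n : ℕ) (ρ lam : ℝ → ℝ)
    (hρ : ∀ r, ρ r =
      -(∫ x in (0:ℝ)..π, Real.cos x * Real.exp (-(r * Real.cos x)) * (Real.sin x) ^ (n - 1)) /
        (∫ x in (0:ℝ)..π, Real.exp (-(r * Real.cos x)) * (Real.sin x) ^ (n - 1)))
    (hρ' : ∀ r : ℝ, 0 < r → 0 < deriv ρ r ∧ deriv ρ r < ρ r / r)
    (hanti : StrictAntiOn (fun r => ρ r / r) (Set.Ioi 0))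
    (hlim : Tendsto (fun r => ρ r / r) (nhdsWithin 0 (Set.Ioi 0)) (nhds (1 / (n + 1))))
    (hlam : ∀ r : ℝ, 0 < r → lam r = 2 * ρ r / r - deriv ρ r)
    (hlam0 : lam 0 = 1 / (n + 1)) :
    (∀ r : ℝ, 0 < r → ρ r / r < lam r ∧ lam r < 2 * ρ r / r) ∧
    ∃ Λ : ℝ, IsGreatest (lam '' Set.Ici 0) Λ ∧
      1 / (n + 1) ≤ Λ ∧ Λ < 2 / (n + 1) := by
  have hρ_eq : ρ = sphereRho n := funext hρ
  have hbounds : ∀ r : ℝ, 0 < r → ρ r / r < lam r ∧ lam r < 2 * ρ r / r := by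
    intro r hr
    rw [hlam r hr, mul_div_assoc]
    constructor <;> linarith [hρ' r hr]
  obtain ⟨r₀, hr₀, hmax⟩ := (continuousOn_Ici_of_eq_two_mul_div_sub_deriv
    (hρ_eq ▸ contDiff_one_sphereRho n) hlim hlam hlam0).exists_isMaxOn' isClosed_Ici
    self_mem_Ici (hlam0.symm ▸ eventually_cocompact_le_of_lt_two_mul_div
      (hρ_eq ▸ sphereRho_le_one n) (fun r hr => (hbounds r hr).2) (by positivity))
  refine ⟨hbounds, lam r₀, ⟨mem_image_of_mem lam hr₀, ?_⟩, hlam0 ▸ hmax self_mem_Ici, ?_⟩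
  · rintro _ ⟨r, hr, rfl⟩
    exact hmax hr
  rcases (mem_Ici.1 hr₀).eq_or_lt with h | h
  · rw [← h, hlam0]
    gcongr
    norm_num
  · calc lam r₀ < 2 * (ρ r₀ / r₀) := mul_div_assoc 2 (ρ r₀) r₀ ▸ (hbounds r₀ h).2
      _ < 2 * (1 / (n + 1)) := mul_lt_mul_of_pos_left (hanti.lt_of_tendsto_nhdsGT hlim h) two_pos
      _ = 2 / (n + 1) := by ring

/-- With `λ(r) = 2ρ(r)/r - ρ'(r)` for `r > 0` and `λ(0) = 1/(n+1)`,
one has `ρ(r)/r < λ(r) < 2ρ(r)/r` for all `r > 0`, and `Λ := max_{r ≥ 0} λ(r)`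
exists and satisfies `1/(n+1) ≤ Λ < 2/(n+1)`. The known facts `0 < ρ' < ρ/r`,
strict monotonicity of `ρ/r` and its limit `1/(n+1)` at `0⁺` are hypotheses. -/
theorem stmt16 (n : ℕ) (hn : 1 ≤ n) (ρ lam : ℝ → ℝ)
    (hρ : ∀ r, ρ r =
      -(∫ x in (0:ℝ)..π, Real.cos x * Real.exp (-(r * Real.cos x)) * (Real.sin x) ^ (n - 1)) /
        (∫ x in (0:ℝ)..π, Real.exp (-(r * Real.cos x)) * (Real.sin x) ^ (n - 1)))
    (hρ' : ∀ r : ℝ, 0 < r → 0 < deriv ρ r ∧ deriv ρ r < ρ r / r)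
    (hanti : StrictAntiOn (fun r => ρ r / r) (Set.Ioi 0))
    (hlim : Tendsto (fun r => ρ r / r) (nhdsWithin 0 (Set.Ioi 0)) (nhds (1 / (n + 1))))
    (hlam : ∀ r : ℝ, 0 < r → lam r = 2 * ρ r / r - deriv ρ r)
    (hlam0 : lam 0 = 1 / (n + 1)) :
    (∀ r : ℝ, 0 < r → ρ r / r < lam r ∧ lam r < 2 * ρ r / r) ∧
    ∃ Λ : ℝ, IsGreatest (lam '' Set.Ici 0) Λ ∧
      1 / (n + 1) ≤ Λ ∧ Λ < 2 / (n + 1) :=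
  stmt16_general n ρ lam hρ hρ' hanti hlim hlam hlam0
end
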